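/- Strict Elimination: The reduction relation ⇒_S induced by strict dominance (by pure strategies) on restrictions of a finite strategic game satisfies the unique normal form property, and its transitive closure equals that of the single-strategy elimination relation ⇒_{1,S}. -/

import Mathlib

/-! Strict dominance inside a restriction `T` with nonempty strategy sets is a strict partial
order on each `T i`, and it is inherited by every smaller restriction. A strategy that is
undominated in `T` survives every reduction of `T`, and every dominated strategy is dominated by
an undominated one. Hence if `T ⇒ T₁` and `T ⇒ T₂`, then `T₁ ⇒ T₁ ⊓ T₂` or `T₁ = T₁ ⊓ T₂`: a
one-step diamond, so `⇒` is confluent by Church–Rosser, and since it strictly shrinks `T` every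
restriction has exactly one normal form. A reduction step splits into single eliminations because,
after removing one eliminated strategy, heredity still justifies the remaining eliminations. -/

/-- In the restriction with strategy sets `T`, strategy `s` of player `i` is strictly
dominated by `s'`. -/
def StrictDom {n : ℕ} {S : Fin n → Type*} (p : Fin n → (∀ i, S i) → ℝ)
    (T : ∀ i, Finset (S i)) (i : Fin n) (s s' : S i) : Prop :=
  ∀ σ : ∀ j, S j, (∀ j, σ j ∈ T j) →
    p i (Function.update σ i s) < p i (Function.update σ i s')

/-- The reduction `G ⇒_S G'` by strict dominance between restrictions of a finite game. -/
def StrictRed {n : ℕ} {S : Fin n → Type*} (p : Fin n → (∀ i, S i) → ℝ)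
    (T T' : ∀ i, Finset (S i)) : Prop :=
  T ≠ T' ∧ (∀ i, T' i ⊆ T i) ∧
    (∀ i, ∀ s ∈ T i, s ∉ T' i → ∃ s' ∈ T' i, StrictDom p T i s s')

open Function Finset Relation

theorem Relation.church_rosser_of_invariant {α : Type*} {r : α → α → Prop} {P : α → Prop}
    (hP : ∀ a b, r a b → P a → P b)
    (h : ∀ a b c, P a → r a b → r a c → ∃ d, ReflGen r b d ∧ ReflTransGen r c d)
    {a b c : α} (ha : P a) (hab : ReflTransGen r a b) (hac : ReflTransGen r a c) :
    Join (ReflTransGen r) b c := by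
  let r' a b := P a ∧ r a b
  have lift {a b} (hab : ReflTransGen r a b) (ha : P a) : ReflTransGen r' a b := by
    induction hab using ReflTransGen.head_induction_on with
    | refl => exact .refl
    | head hac _ ih => exact .head ⟨ha, hac⟩ (ih (hP _ _ hac ha))
  have diamond a b c (hab : r' a b) (hac : r' a c) :
      ∃ d, ReflGen r' b d ∧ ReflTransGen r' c d := by
    obtain ⟨d, hbd, hcd⟩ := h a b c hab.1 hab.2 hac.2
    refine ⟨d, ?_, lift hcd (hP _ _ hac.2 hac.1)⟩
    cases hbd with
    | refl => exact .refl
    | single hbd => exact .single ⟨hP _ _ hab.2 hab.1, hbd⟩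
  obtain ⟨d, hbd, hcd⟩ := church_rosser diamond (lift hab ha) (lift hac ha)
  exact ⟨d, ReflTransGen.mono (fun _ _ h => h.2) _ _ hbd,
    ReflTransGen.mono (fun _ _ h => h.2) _ _ hcd⟩

theorem Relation.ReflTransGen.eq_of_forall_not {α : Type*} {r : α → α → Prop} {a b : α}
    (hab : ReflTransGen r a b) (ha : ∀ c, ¬ r a c) : a = b := by
  rcases hab.cases_head with rfl | ⟨c, hac, -⟩
  · rfl
  · exact absurd hac (ha c)

theorem WellFounded.exists_reflTransGen_forall_not {α : Type*} {r : α → α → Prop}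
    (hr : WellFounded (flip r)) (a : α) : ∃ b, ReflTransGen r a b ∧ ∀ c, ¬ r b c := by
  obtain ⟨b, hab, hmin⟩ := hr.has_min {b | ReflTransGen r a b} ⟨a, .refl⟩
  exact ⟨b, hab, fun c hbc => hmin c (hab.tail hbc) hbc⟩

section

variable {n : ℕ} {S : Fin n → Type*} {p : Fin n → (∀ i, S i) → ℝ}

-- The single-elimination relation `⇒_{1,S}`.
def StrictRedOne [∀ i, DecidableEq (S i)] (p : Fin n → (∀ i, S i) → ℝ)
    (T T' : ∀ i, Finset (S i)) : Prop :=
  StrictRed p T T' ∧ ∑ i, (T i \ T' i).card = 1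

namespace StrictDom

variable {T U : ∀ i, Finset (S i)} {i : Fin n} {s t u : S i}

theorem mono (hUT : U ≤ T) (h : StrictDom p T i s t) : StrictDom p U i s t :=
  fun σ hσ => h σ fun j => hUT j (hσ j)

theorem trans (hst : StrictDom p T i s t) (htu : StrictDom p T i t u) : StrictDom p T i s u :=
  fun σ hσ => (hst σ hσ).trans (htu σ hσ)

theorem irrefl (hT : ∀ j, (T j).Nonempty) : ¬ StrictDom p T i s s :=
  fun h => (h (fun j => (hT j).choose) fun j => (hT j).choose_spec).false

theorem exists_undominated [Finite (S i)] (hT : ∀ j, (T j).Nonempty)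
    (hst : StrictDom p T i s t) (ht : t ∈ T i) :
    ∃ u ∈ T i, StrictDom p T i s u ∧ ∀ v ∈ T i, ¬ StrictDom p T i u v := by
  have : IsTrans (S i) (flip (StrictDom p T i)) := ⟨fun _ _ _ h₁ h₂ => h₂.trans h₁⟩
  have : Std.Irrefl (flip (StrictDom p T i)) := ⟨fun _ => irrefl hT⟩
  obtain ⟨u, ⟨hu, hsu⟩, hmax⟩ := (Finite.wellFounded_of_trans_of_irrefl
    (flip (StrictDom p T i))).has_min {u | u ∈ T i ∧ StrictDom p T i s u} ⟨t, ht, hst⟩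
  exact ⟨u, hu, hsu, fun v hv huv => hmax v ⟨hv, hsu.trans huv⟩ huv⟩

end StrictDom

namespace StrictRed

variable {T T' T₁ T₂ U : ∀ i, Finset (S i)} {i : Fin n} {t : S i}

theorem le (h : StrictRed p T T') : T' ≤ T := h.2.1

theorem lt (h : StrictRed p T T') : T' < T := lt_of_le_of_ne h.le (Ne.symm h.1)

theorem nonempty (h : StrictRed p T T') (hT : ∀ i, (T i).Nonempty) (i : Fin n) :
    (T' i).Nonempty := by
  obtain ⟨s, hs⟩ := hT i
  by_cases hs' : s ∈ T' i
  · exact ⟨s, hs'⟩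
  · obtain ⟨t, ht, -⟩ := h.2.2 i s hs hs'
    exact ⟨t, ht⟩

theorem sum_card_lt (h : StrictRed p T T') : ∑ i, (T' i).card < ∑ i, (T i).card := by
  obtain ⟨i, hi⟩ := Pi.lt_def.1 h.lt |>.2
  exact sum_lt_sum (fun j _ => card_le_card (h.le j)) ⟨i, mem_univ i, card_lt_card hi⟩

theorem wellFounded : WellFounded (flip (StrictRed (S := S) p)) :=
  (InvImage.wf (fun T : ∀ i, Finset (S i) => ∑ i, (T i).card) wellFounded_lt).mono
    fun _ _ h => sum_card_lt h

theorem mem_of_undominated (h : StrictRed p T T') (ht : t ∈ T i)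
    (hmax : ∀ u ∈ T i, ¬ StrictDom p T i t u) : t ∈ T' i := by
  by_contra ht'
  obtain ⟨u, hu, htu⟩ := h.2.2 i t ht ht'
  exact hmax u (h.le i hu) htu

theorem of_le_of_le (h : StrictRed p T T') (hUT : U ≤ T) (hT'U : T' ≤ U) (hU : U ≠ T') :
    StrictRed p U T' :=
  ⟨hU, hT'U, fun i s hs hs' =>
    (h.2.2 i s (hUT i hs) hs').imp fun _ ⟨ht, hst⟩ => ⟨ht, hst.mono hUT⟩⟩

variable [∀ i, Finite (S i)] [∀ i, DecidableEq (S i)]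

theorem inf (hT : ∀ i, (T i).Nonempty) (h₁ : StrictRed p T T₁) (h₂ : StrictRed p T T₂)
    (hne : T₁ ≠ T₁ ⊓ T₂) : StrictRed p T₁ (T₁ ⊓ T₂) := by
  refine ⟨hne, (inf_le_left : T₁ ⊓ T₂ ≤ T₁), fun i s hs₁ hs => ?_⟩
  have hs₂ : s ∉ T₂ i := fun hs₂ => hs (mem_inter.2 ⟨hs₁, hs₂⟩)
  obtain ⟨t, ht₂, hst⟩ := h₂.2.2 i s (h₁.le i hs₁) hs₂
  obtain ⟨u, hu, hsu, hmax⟩ := hst.exists_undominated hT (h₂.le i ht₂)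
  exact ⟨u, mem_inter.2 ⟨h₁.mem_of_undominated hu hmax, h₂.mem_of_undominated hu hmax⟩,
    hsu.mono h₁.le⟩

theorem reflGen_inf (hT : ∀ i, (T i).Nonempty) (h₁ : StrictRed p T T₁)
    (h₂ : StrictRed p T T₂) : ReflGen (StrictRed p) T₁ (T₁ ⊓ T₂) := by
  by_cases hne : T₁ = T₁ ⊓ T₂
  · exact hne ▸ .refl
  · exact .single (h₁.inf hT h₂ hne)

theorem join_reflTransGen (hT : ∀ i, (T i).Nonempty) (h₁ : ReflTransGen (StrictRed p) T T₁)
    (h₂ : ReflTransGen (StrictRed p) T T₂) : Join (ReflTransGen (StrictRed p)) T₁ T₂ :=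
  church_rosser_of_invariant (fun _ _ h hT => h.nonempty hT)
    (fun _ _ _ hT h₁ h₂ => ⟨_, h₁.reflGen_inf hT h₂,
      by rw [inf_comm]; exact (h₂.reflGen_inf hT h₁).to_reflTransGen⟩) hT h₁ h₂

end StrictRed

section SingleElimination

variable [∀ i, DecidableEq (S i)] {T T' : ∀ i, Finset (S i)} {i : Fin n} {s t : S i}

theorem sum_card_sdiff_update_erase (hs : s ∈ T i) :
    ∑ j, (T j \ update T i ((T i).erase s) j).card = 1 := by
  rw [sum_eq_single i (fun j _ hj => by simp [update_of_ne hj])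
    (fun h => absurd (mem_univ i) h), update_self, sdiff_erase_self hs, card_singleton]

theorem strictRedOne_update_erase (hs : s ∈ T i) (ht : t ∈ T i) (hts : t ≠ s)
    (hst : StrictDom p T i s t) : StrictRedOne p T (update T i ((T i).erase s)) := by
  refine ⟨⟨fun h => ?_, update_le_iff.2 ⟨erase_subset s _, fun _ _ => le_rfl⟩,
    fun j u hu hu' => ?_⟩, sum_card_sdiff_update_erase hs⟩
  · exact erase_ne_self.2 hs (update_eq_self_iff.1 h.symm)
  obtain rfl : j = i := by
    by_contra hji
    exact hu' (by rwa [update_of_ne hji])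
  obtain rfl : u = s := by
    by_contra hus
    exact hu' (by rw [update_self]; exact mem_erase.2 ⟨hus, hu⟩)
  exact ⟨t, by rw [update_self]; exact mem_erase.2 ⟨hts, ht⟩, hst⟩

theorem StrictRed.transGen_strictRedOne (h : StrictRed p T T') :
    TransGen (StrictRedOne p) T T' := by
  induction T using (StrictRed.wellFounded (p := p)).induction generalizing T' with
  | h T ih =>
  obtain ⟨i, s, hs, hs'⟩ : ∃ i, ∃ s ∈ T i, s ∉ T' i := by
    by_contra! hc
    exact h.1 (le_antisymm (fun i s hs => hc i s hs) h.le)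
  obtain ⟨t, ht, hst⟩ := h.2.2 i s hs hs'
  have hU := strictRedOne_update_erase hs (h.le i ht) (ne_of_mem_of_not_mem ht hs') hst
  by_cases hUT' : update T i ((T i).erase s) = T'
  · exact .single (hUT' ▸ hU)
  · have hT'U : T' ≤ update T i ((T i).erase s) :=
      le_update_iff.2 ⟨subset_erase.2 ⟨h.le i, hs'⟩, fun j _ => h.le j⟩
    exact .head hU (ih _ hU.1 (h.of_le_of_le hU.1.le hT'U hUT'))

end SingleElimination

end

/-- Strict Elimination: `⇒_S` has the unique normal form property, and its transitive
closure equals that of the one-strategy-at-a-time relation `⇒_{1,S}`. -/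
theorem strict_elimination {n : ℕ} {S : Fin n → Type*}
    [∀ i, Fintype (S i)] [∀ i, DecidableEq (S i)]
    (p : Fin n → (∀ i, S i) → ℝ) :
    (∀ T : ∀ i, Finset (S i), (∀ i, (T i).Nonempty) →
      ∃! T' : ∀ i, Finset (S i),
        Relation.ReflTransGen (StrictRed p) T T' ∧
        ∀ T'' : ∀ i, Finset (S i), ¬ StrictRed p T' T'') ∧
    Relation.TransGen
        (fun T T' : ∀ i, Finset (S i) => StrictRed p T T' ∧ (∑ i, (T i \ T' i).card) = 1) =
      Relation.TransGen (StrictRed p) := by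
  refine ⟨fun T hT => ?_, ?_⟩
  · obtain ⟨T', hTT', hT'⟩ := StrictRed.wellFounded.exists_reflTransGen_forall_not T
    refine ⟨T', ⟨hTT', hT'⟩, fun T'' ⟨hTT'', hT''⟩ => ?_⟩
    obtain ⟨W, hT''W, hT'W⟩ := StrictRed.join_reflTransGen hT hTT'' hTT'
    exact (hT''W.eq_of_forall_not hT'').trans (hT'W.eq_of_forall_not hT').symm
  · exact le_antisymm (TransGen.mono fun _ _ h => h.1)
      (TransGen.closed fun _ _ h => h.transGen_strictRedOne)
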